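/- Assume: Ψ, ∂Ψ/∂r, Y, Q, Q' satisfy, as (r,R)→(0,0) and r→0⁺ respectively, Ψ(r,R) = ψ₃₀r³ + ψ₂₁r²R + ψ₁₂rR² + ψ₀₃R³ + o((|r|+|R|)³), ∂Ψ/∂r(r,R) = 3ψ₃₀r² + 2ψ₂₁rR + ψ₁₂R² + o((|r|+|R|)²), Y(r,R) = 1 + y₂₀r² + y₁₁rR + y₀₂R² + o((|r|+|R|)²), Q(r) = q₀r^{2+p} + o(r^{2+p}), Q'(r) = (2+p)q₀r^{1+p} + o(r^{1+p}), with q₀ ≠ 0, ψ₃₀ > 0 and real p > 1. Define Ψ₁ := Ψ − Q²/(2R), Y₁ := (1 − QQ'/(R·∂Ψ/∂r))·Y, u₁² := 2Ψ₁/R − 1 + Y₁². Let 0 < c₁ ≤ c₂ and let R_u : (0,ε) → ℝ satisfy c₁r^{2p+1} ≤ R_u(r) ≤ c₂r^{2p+1} and u₁²(r,R_u(r)) = 0 for all r ∈ (0,ε). Then lim_{r→0⁺} R_u(r)/r^{2p+1} = q₀²/(2ψ₃₀). -/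

import Mathlib

open Filter Topology Asymptotics

/-- The charged velocity function
`u₁²(r,R) = 2Ψ₁/R − 1 + Y₁²`, with `Ψ₁ = Ψ − Q²/(2R)` and
`Y₁ = (1 − QQ'/(R·∂Ψ/∂r))·Y`. -/
noncomputable def u1sq (Ψ Ψr Y : ℝ → ℝ → ℝ) (Q Q' : ℝ → ℝ) (r R : ℝ) : ℝ :=
  2 * (Ψ r R - Q r ^ 2 / (2 * R)) / R - 1
    + ((1 - Q r * Q' r / (R * Ψr r R)) * Y r R) ^ 2

/-!
Write `R = λ r^(2p+1)`. On `u₁² = 0` one has `2ΨR = Q² + R²(1 − Y₁²)`, and dividing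
by `r^(2p+4)` turns this into `λ · 2Ψ/r³ = (Q/r^(2+p))² + r^(2p−2) · λ²(1 − Y₁²)`.
The pinching `c₁ ≤ λ ≤ c₂` gives `R = o(r)`, so the expansions yield `Ψ/r³ → ψ₃₀`
and `Q/r^(2+p) → q₀`, while `QQ'/(R ∂Ψ/∂r) = (QQ'/r^(3+2p)) / (λ · (∂Ψ/∂r)/r²)`
stays bounded, hence so does `λ²(1 − Y₁²)`. Since `p > 1` the last term vanishes and
`λ → q₀²/(2ψ₃₀)`.
-/

section General

variable {α : Type*} {l : Filter α}

theorem Asymptotics.IsLittleO.tendsto_div_of_sub {F P g : α → ℝ} {a : ℝ}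
    (h : (fun x => F x - P x) =o[l] g) (hP : Tendsto (fun x => P x / g x) l (𝓝 a)) :
    Tendsto (fun x => F x / g x) l (𝓝 a) := by
  simpa [sub_div] using h.tendsto_div_nhds_zero.add hP

theorem tendsto_of_eventually_mul_eq {x D N : α → ℝ} {d n : ℝ}
    (h : ∀ᶠ t in l, x t * D t = N t) (hD : Tendsto D l (𝓝 d)) (hd : d ≠ 0)
    (hN : Tendsto N l (𝓝 n)) : Tendsto x l (𝓝 (n / d)) := by
  refine (hN.div hD hd).congr' ?_
  filter_upwards [h, hD.eventually_ne hd] with t ht hDt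
  rw [Pi.div_apply, ← ht, mul_div_cancel_right₀ _ hDt]

end General

theorem Asymptotics.IsLittleO.comp_graph {f : ℝ × ℝ → ℝ} {R : ℝ → ℝ} {k : ℕ}
    {l : Filter ℝ}
    (hf : f =o[𝓝 (0, 0)] fun q => (|q.1| + |q.2|) ^ k) (hl : l ≤ 𝓝 0)
    (hR : R =O[l] fun r => r) : (fun r => f (r, R r)) =o[l] fun r => r ^ k := by
  have hl' : Tendsto (fun r => r) l (𝓝 0) := tendsto_id'.2 hl
  have hsum : (fun r => |r| + |R r|) =O[l] fun r => r :=
    (isBigO_abs_left.2 (isBigO_refl _ _)).add (isBigO_abs_left.2 hR)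
  exact (hf.comp_tendsto (hl'.prodMk_nhds (hR.trans_tendsto hl'))).trans_isBigO
    (hsum.pow k)

theorem tendsto_rpow_nhdsGT_zero {s : ℝ} (hs : 0 < s) :
    Tendsto (fun r : ℝ => r ^ s) (𝓝[>] 0) (𝓝 0) := by
  simpa [Real.zero_rpow hs.ne'] using
    (Real.continuousAt_rpow_const 0 s (Or.inr hs.le)).tendsto.mono_left nhdsWithin_le_nhds

theorem rpow_isLittleO_id_nhdsGT {s : ℝ} (hs : 1 < s) :
    (fun r : ℝ => r ^ s) =o[𝓝[>] 0] fun r => r := by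
  refine (isLittleO_iff_tendsto' ?_).2 ((tendsto_rpow_nhdsGT_zero (sub_pos.2 hs)).congr' ?_)
  · filter_upwards [self_mem_nhdsWithin] with r (hr : 0 < r) h0
    exact absurd h0 hr.ne'
  · filter_upwards [self_mem_nhdsWithin] with r (hr : 0 < r)
    rw [Real.rpow_sub_one hr.ne']

theorem tendsto_div_rpow_of_isLittleO_sub {Q : ℝ → ℝ} {c a : ℝ}
    (h : (fun r => Q r - c * r ^ a) =o[𝓝[>] (0:ℝ)] fun r => r ^ a) :
    Tendsto (fun r => Q r / r ^ a) (𝓝[>] 0) (𝓝 c) := by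
  refine h.tendsto_div_of_sub (tendsto_const_nhds.congr' ?_)
  filter_upwards [self_mem_nhdsWithin] with r (hr : 0 < r)
  exact (mul_div_cancel_right₀ c (Real.rpow_pos_of_pos hr a).ne').symm

section Expansions

variable {R : ℝ → ℝ}

theorem tendsto_div_cube_of_expansion {Ψ : ℝ → ℝ → ℝ} {ψ30 ψ21 ψ12 ψ03 : ℝ}
    (hΨ : (fun q : ℝ × ℝ =>
        Ψ q.1 q.2 - (ψ30*q.1^3 + ψ21*q.1^2*q.2 + ψ12*q.1*q.2^2 + ψ03*q.2^3))
      =o[𝓝 (0, 0)] fun q : ℝ × ℝ => (|q.1| + |q.2|)^3)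
    (hR : R =o[𝓝[>] 0] fun r => r) :
    Tendsto (fun r => Ψ r (R r) / r ^ 3) (𝓝[>] 0) (𝓝 ψ30) := by
  refine (hΨ.comp_graph nhdsWithin_le_nhds hR.isBigO).tendsto_div_of_sub ?_
  have hcubic : Tendsto (fun t : ℝ => ψ30 + ψ21 * t + ψ12 * t ^ 2 + ψ03 * t ^ 3)
      (𝓝 0) (𝓝 ψ30) :=
    Continuous.tendsto' (by fun_prop) 0 ψ30 (by simp)
  refine (hcubic.comp hR.tendsto_div_nhds_zero).congr' ?_
  filter_upwards [self_mem_nhdsWithin] with r (hr : 0 < r)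
  simp only [Function.comp_apply]
  field_simp

theorem tendsto_div_sq_of_expansion {Ψr : ℝ → ℝ → ℝ} {ψ30 ψ21 ψ12 : ℝ}
    (hΨr : (fun q : ℝ × ℝ =>
        Ψr q.1 q.2 - (3*ψ30*q.1^2 + 2*ψ21*q.1*q.2 + ψ12*q.2^2))
      =o[𝓝 (0, 0)] fun q : ℝ × ℝ => (|q.1| + |q.2|)^2)
    (hR : R =o[𝓝[>] 0] fun r => r) :
    Tendsto (fun r => Ψr r (R r) / r ^ 2) (𝓝[>] 0) (𝓝 (3 * ψ30)) := by
  refine (hΨr.comp_graph nhdsWithin_le_nhds hR.isBigO).tendsto_div_of_sub ?_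
  have hquad : Tendsto (fun t : ℝ => 3 * ψ30 + 2 * ψ21 * t + ψ12 * t ^ 2)
      (𝓝 0) (𝓝 (3 * ψ30)) :=
    Continuous.tendsto' (by fun_prop) 0 _ (by simp)
  refine (hquad.comp hR.tendsto_div_nhds_zero).congr' ?_
  filter_upwards [self_mem_nhdsWithin] with r (hr : 0 < r)
  simp only [Function.comp_apply]
  field_simp

theorem tendsto_one_of_expansion {Y : ℝ → ℝ → ℝ} {y20 y11 y02 : ℝ}
    (hY : (fun q : ℝ × ℝ =>
        Y q.1 q.2 - (1 + y20*q.1^2 + y11*q.1*q.2 + y02*q.2^2))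
      =o[𝓝 (0, 0)] fun q : ℝ × ℝ => (|q.1| + |q.2|)^2)
    (hR : R =o[𝓝[>] 0] fun r => r) :
    Tendsto (fun r => Y r (R r)) (𝓝[>] 0) (𝓝 1) := by
  have hl : Tendsto (fun r : ℝ => r) (𝓝[>] 0) (𝓝 0) := tendsto_id'.2 nhdsWithin_le_nhds
  have hrem := (hY.comp_graph nhdsWithin_le_nhds hR.isBigO).trans_tendsto
    (by simpa using hl.pow 2)
  have hpoly : Tendsto (fun q : ℝ × ℝ => 1 + y20*q.1^2 + y11*q.1*q.2 + y02*q.2^2)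
      (𝓝 (0, 0)) (𝓝 1) :=
    Continuous.tendsto' (by fun_prop) _ _ (by simp)
  simpa using hrem.add (hpoly.comp (hl.prodMk_nhds (hR.isBigO.trans_tendsto hl)))

end Expansions

noncomputable def Y1 (Ψr Y : ℝ → ℝ → ℝ) (Q Q' : ℝ → ℝ) (r R : ℝ) : ℝ :=
  (1 - Q r * Q' r / (R * Ψr r R)) * Y r R

theorem two_mul_mul_eq_of_u1sq_eq_zero {Ψ Ψr Y : ℝ → ℝ → ℝ} {Q Q' : ℝ → ℝ}
    {r R : ℝ} (hR : R ≠ 0) (h : u1sq Ψ Ψr Y Q Q' r R = 0) :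
    2 * Ψ r R * R = Q r ^ 2 + R ^ 2 * (1 - Y1 Ψr Y Q Q' r R ^ 2) := by
  rw [u1sq, ← Y1] at h
  field_simp at h
  linear_combination h

theorem rescaled_balance {r p Ψ R Q W : ℝ} (hr : 0 < r) (h : 2 * Ψ * R = Q ^ 2 + R ^ 2 * W) :
    R / r ^ (2 * p + 1) * (2 * (Ψ / r ^ 3)) =
      (Q / r ^ (2 + p)) ^ 2 + r ^ (2 * p - 2) * ((R / r ^ (2 * p + 1)) ^ 2 * W) := by
  have e1 : r ^ (2 * p + 1) = r ^ p * r ^ p * r := by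
    rw [two_mul, Real.rpow_add hr, Real.rpow_add hr, Real.rpow_one]
  have e2 : r ^ (2 + p) = r ^ 2 * r ^ p := by
    rw [Real.rpow_add hr, Real.rpow_two]
  have e3 : r ^ (2 * p - 2) = r ^ p * r ^ p / r ^ 2 := by
    rw [Real.rpow_sub hr, two_mul, Real.rpow_add hr, Real.rpow_two]
  have hs : 0 < r ^ p := Real.rpow_pos_of_pos hr p
  rw [e1, e2, e3]
  field_simp
  linear_combination h

theorem isBigO_one_rescaled_correction {Ψr Y : ℝ → ℝ → ℝ} {Q Q' R : ℝ → ℝ}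
    {p c₁ c₂ q0 q1 μ y : ℝ} (hc₁ : 0 < c₁)
    (hpinch : ∀ᶠ r in 𝓝[>] (0:ℝ),
      c₁ ≤ R r / r ^ (2 * p + 1) ∧ R r / r ^ (2 * p + 1) ≤ c₂)
    (hQ : Tendsto (fun r => Q r / r ^ (2 + p)) (𝓝[>] 0) (𝓝 q0))
    (hQ' : Tendsto (fun r => Q' r / r ^ (1 + p)) (𝓝[>] 0) (𝓝 q1))
    (hΨr : Tendsto (fun r => Ψr r (R r) / r ^ 2) (𝓝[>] 0) (𝓝 μ)) (hμ : μ ≠ 0)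
    (hY : Tendsto (fun r => Y r (R r)) (𝓝[>] 0) (𝓝 y)) :
    (fun r => (R r / r ^ (2 * p + 1)) ^ 2 * (1 - Y1 Ψr Y Q Q' r (R r) ^ 2))
      =O[𝓝[>] 0] fun _ => (1:ℝ) := by
  have hscaleO : (fun r => R r / r ^ (2 * p + 1)) =O[𝓝[>] 0] fun _ => (1:ℝ) :=
    IsBigO.of_bound c₂ <| hpinch.mono fun r hr => by
      rw [norm_one, mul_one, Real.norm_of_nonneg (hc₁.le.trans hr.1)]
      exact hr.2
  have hscaleInv : (fun r => (R r / r ^ (2 * p + 1))⁻¹) =O[𝓝[>] 0] fun _ => (1:ℝ) :=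
    IsBigO.of_bound c₁⁻¹ <| hpinch.mono fun r hr => by
      rw [norm_one, mul_one, norm_inv, Real.norm_of_nonneg (hc₁.le.trans hr.1)]
      exact inv_anti₀ hc₁ hr.1
  have hratio : (fun r => Q r * Q' r / (R r * Ψr r (R r))) =O[𝓝[>] 0] fun _ => (1:ℝ) := by
    have h := (((hQ.mul hQ').isBigO_one ℝ).mul hscaleInv).mul ((hΨr.inv₀ hμ).isBigO_one ℝ)
    refine h.congr' ?_ (.of_forall fun _ => by norm_num)
    filter_upwards [self_mem_nhdsWithin, hpinch, hΨr.eventually_ne hμ]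
      with r (hr : 0 < r) hRr hΨrr
    have hR : 0 < R r :=
      (div_pos_iff_of_pos_right (Real.rpow_pos_of_pos hr _)).1 (hc₁.trans_le hRr.1)
    have hΨrr : Ψr r (R r) ≠ 0 := (div_ne_zero_iff.1 hΨrr).1
    rw [two_mul, Real.rpow_add hr, Real.rpow_add hr, Real.rpow_add hr, Real.rpow_add hr,
      Real.rpow_one, Real.rpow_two]
    have hs : 0 < r ^ p := Real.rpow_pos_of_pos hr p
    field_simp
  have hY1 : (fun r => Y1 Ψr Y Q Q' r (R r)) =O[𝓝[>] 0] fun _ => (1:ℝ) := by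
    simpa [Y1] using
      ((isBigO_const_const (1:ℝ) one_ne_zero _).sub hratio).mul (hY.isBigO_one ℝ)
  simpa using (hscaleO.pow 2).mul
    ((isBigO_const_const (1:ℝ) one_ne_zero _).sub (by simpa using hY1.pow 2))

theorem vanishing_curve_asymptotics_p_gt_one_general
    (Ψ Ψr Y : ℝ → ℝ → ℝ) (Q Q' : ℝ → ℝ)
    (ψ30 ψ21 ψ12 ψ03 y20 y11 y02 q0 p : ℝ)
    (hψ30 : 0 < ψ30) (hp : 1 < p)
    (hΨ : (fun q : ℝ × ℝ =>
        Ψ q.1 q.2 - (ψ30*q.1^3 + ψ21*q.1^2*q.2 + ψ12*q.1*q.2^2 + ψ03*q.2^3))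
      =o[nhds ((0:ℝ), (0:ℝ))] fun q : ℝ × ℝ => (|q.1| + |q.2|)^3)
    (hΨr : (fun q : ℝ × ℝ =>
        Ψr q.1 q.2 - (3*ψ30*q.1^2 + 2*ψ21*q.1*q.2 + ψ12*q.2^2))
      =o[nhds ((0:ℝ), (0:ℝ))] fun q : ℝ × ℝ => (|q.1| + |q.2|)^2)
    (hY : (fun q : ℝ × ℝ =>
        Y q.1 q.2 - (1 + y20*q.1^2 + y11*q.1*q.2 + y02*q.2^2))
      =o[nhds ((0:ℝ), (0:ℝ))] fun q : ℝ × ℝ => (|q.1| + |q.2|)^2)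
    (hQ : (fun r : ℝ => Q r - q0 * r ^ (2+p)) =o[𝓝[>] (0:ℝ)] fun r : ℝ => r ^ (2+p))
    (hQ' : (fun r : ℝ => Q' r - (2+p) * q0 * r ^ (1+p))
      =o[𝓝[>] (0:ℝ)] fun r : ℝ => r ^ (1+p))
    (c₁ c₂ ε : ℝ) (hc₁ : 0 < c₁) (hε : 0 < ε)
    (Ru : ℝ → ℝ)
    (hRu : ∀ r ∈ Set.Ioo (0:ℝ) ε,
      c₁ * r ^ (2*p+1) ≤ Ru r ∧ Ru r ≤ c₂ * r ^ (2*p+1) ∧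
      u1sq Ψ Ψr Y Q Q' r (Ru r) = 0) :
    Tendsto (fun r : ℝ => Ru r / r ^ (2*p+1)) (𝓝[>] (0:ℝ))
      (𝓝 (q0^2 / (2*ψ30))) := by
  have hcurve : ∀ᶠ r in 𝓝[>] (0:ℝ), 0 < r ∧ c₁ * r ^ (2*p+1) ≤ Ru r ∧
      Ru r ≤ c₂ * r ^ (2*p+1) ∧ u1sq Ψ Ψr Y Q Q' r (Ru r) = 0 :=
    eventually_of_mem (Ioo_mem_nhdsGT hε) fun r hr => ⟨hr.1, hRu r hr⟩
  have hRpos : ∀ᶠ r in 𝓝[>] (0:ℝ), 0 < Ru r := hcurve.mono fun r ⟨hr, hlow, _⟩ =>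
    (mul_pos hc₁ (Real.rpow_pos_of_pos hr _)).trans_le hlow
  have hpinch : ∀ᶠ r in 𝓝[>] (0:ℝ),
      c₁ ≤ Ru r / r ^ (2*p+1) ∧ Ru r / r ^ (2*p+1) ≤ c₂ := by
    filter_upwards [hcurve] with r ⟨hr, hlow, hup, _⟩
    have := Real.rpow_pos_of_pos hr (2*p+1)
    exact ⟨(le_div_iff₀ this).2 hlow, (div_le_iff₀ this).2 hup⟩
  have hRo : Ru =o[𝓝[>] 0] fun r => r := by
    refine (IsBigO.of_bound c₂ ?_).trans_isLittleO (rpow_isLittleO_id_nhdsGT (s := 2*p+1)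
      (by linarith))
    filter_upwards [hcurve, hRpos] with r ⟨hr, _, hup, _⟩ hRr
    rwa [Real.norm_of_nonneg hRr.le, Real.norm_of_nonneg (Real.rpow_nonneg hr.le _)]
  have hQ0 := tendsto_div_rpow_of_isLittleO_sub hQ
  have hW := isBigO_one_rescaled_correction hc₁ hpinch hQ0
    (tendsto_div_rpow_of_isLittleO_sub hQ') (tendsto_div_sq_of_expansion hΨr hRo)
    (by positivity) (tendsto_one_of_expansion hY hRo)
  have hbalance : ∀ᶠ r in 𝓝[>] (0:ℝ), Ru r / r ^ (2*p+1) * (2 * (Ψ r (Ru r) / r ^ 3)) =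
      (Q r / r ^ (2 + p)) ^ 2 + r ^ (2*p-2) *
        ((Ru r / r ^ (2*p+1)) ^ 2 * (1 - Y1 Ψr Y Q Q' r (Ru r) ^ 2)) := by
    filter_upwards [hcurve, hRpos] with r ⟨hr, _, _, hu⟩ hRr
    exact rescaled_balance hr (two_mul_mul_eq_of_u1sq_eq_zero hRr.ne' hu)
  simpa using tendsto_of_eventually_mul_eq hbalance
    ((tendsto_div_cube_of_expansion hΨ hRo).const_mul 2) (by positivity)
    ((hQ0.pow 2).add ((tendsto_rpow_nhdsGT_zero (by linarith)).zero_mul_isBoundedUnder_le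
      ((isBigO_one_iff ℝ).1 hW)))

/-- Equation (91): in the case `p > 1`, any curve `R_u` pinched between
`c₁r^{2p+1}` and `c₂r^{2p+1}` on which `u₁²` vanishes satisfies
`R_u(r) = (q₀²/(2ψ₃₀))·r^{2p+1} + o(r^{2p+1})`. -/
theorem vanishing_curve_asymptotics_p_gt_one
    (Ψ Ψr Y : ℝ → ℝ → ℝ) (Q Q' : ℝ → ℝ)
    (ψ30 ψ21 ψ12 ψ03 y20 y11 y02 q0 p : ℝ)
    (hψ30 : 0 < ψ30) (hq0 : q0 ≠ 0) (hp : 1 < p)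
    (hlink : ∀ r R, HasDerivAt (fun s => Ψ s R) (Ψr r R) r)
    (hQd : ∀ r, HasDerivAt Q (Q' r) r)
    (hΨ : (fun q : ℝ × ℝ =>
        Ψ q.1 q.2 - (ψ30*q.1^3 + ψ21*q.1^2*q.2 + ψ12*q.1*q.2^2 + ψ03*q.2^3))
      =o[nhds ((0:ℝ), (0:ℝ))] fun q : ℝ × ℝ => (|q.1| + |q.2|)^3)
    (hΨr : (fun q : ℝ × ℝ =>
        Ψr q.1 q.2 - (3*ψ30*q.1^2 + 2*ψ21*q.1*q.2 + ψ12*q.2^2))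
      =o[nhds ((0:ℝ), (0:ℝ))] fun q : ℝ × ℝ => (|q.1| + |q.2|)^2)
    (hY : (fun q : ℝ × ℝ =>
        Y q.1 q.2 - (1 + y20*q.1^2 + y11*q.1*q.2 + y02*q.2^2))
      =o[nhds ((0:ℝ), (0:ℝ))] fun q : ℝ × ℝ => (|q.1| + |q.2|)^2)
    (hQ : (fun r : ℝ => Q r - q0 * r ^ (2+p)) =o[𝓝[>] (0:ℝ)] fun r : ℝ => r ^ (2+p))
    (hQ' : (fun r : ℝ => Q' r - (2+p) * q0 * r ^ (1+p))
      =o[𝓝[>] (0:ℝ)] fun r : ℝ => r ^ (1+p))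
    (c₁ c₂ ε : ℝ) (hc₁ : 0 < c₁) (hc₁₂ : c₁ ≤ c₂) (hε : 0 < ε)
    (Ru : ℝ → ℝ)
    (hRu : ∀ r ∈ Set.Ioo (0:ℝ) ε,
      c₁ * r ^ (2*p+1) ≤ Ru r ∧ Ru r ≤ c₂ * r ^ (2*p+1) ∧
      u1sq Ψ Ψr Y Q Q' r (Ru r) = 0) :
    Tendsto (fun r : ℝ => Ru r / r ^ (2*p+1)) (𝓝[>] (0:ℝ))
      (𝓝 (q0^2 / (2*ψ30))) :=
  vanishing_curve_asymptotics_p_gt_one_general Ψ Ψr Y Q Q' ψ30 ψ21 ψ12 ψ03 y20 y11 y02 q0 p hψ30 hp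
    hΨ hΨr hY hQ hQ' c₁ c₂ ε hc₁ hε Ru hRu
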